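/- Let a, b, x, y be points in Euclidean 3-space with a ≠ b, x ≠ a, x ≠ b, y ≠ a, y ≠ b, x ≠ y. If the four angles adjacent to the edge [ab] satisfy ∠abx + ∠aby + ∠bax + ∠bay ≤ π, then area(△abx) + area(△aby) ≥ area(△axy) + area(△bxy). (Flipping the edge [ab] to the edge [xy] does not increase the total area of the two triangles.) -/

import Mathlib

open EuclideanGeometry
open scoped RealInnerProductSpace

/-- Euclidean 3-space ℝ³. -/
abbrev Space3 := EuclideanSpace ℝ (Fin 3)

/-- Area of the triangle △pqr, with the angle taken at the middle vertex q. -/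
noncomputable def triArea3 (p q r : Space3) : ℝ :=
  1 / 2 * dist q p * dist q r * Real.sin (∠ p q r)


private lemma star_ineq (P R g h : ℝ) (hg : |g| ≤ P) (hh : |h| ≤ R)
    (hgh : 0 ≤ g * R + h * P) :
    0 ≤ g * Real.sqrt (R ^ 2 - h ^ 2) + h * Real.sqrt (P ^ 2 - g ^ 2) := by
  have hP : 0 ≤ P := le_trans (abs_nonneg g) hg
  have hR : 0 ≤ R := le_trans (abs_nonneg h) hh
  have hg1 := le_abs_self g
  have hg2 := neg_abs_le g
  have hh1 := le_abs_self h
  have hh2 := neg_abs_le h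
  rcases le_or_gt 0 g with hg0 | hg0 <;> rcases le_or_gt 0 h with hh0 | hh0
  · have := Real.sqrt_nonneg (R ^ 2 - h ^ 2)
    have := Real.sqrt_nonneg (P ^ 2 - g ^ 2)
    positivity
  · -- g ≥ 0, h < 0
    have key : Real.sqrt (h ^ 2 * (P ^ 2 - g ^ 2)) ≤ Real.sqrt (g ^ 2 * (R ^ 2 - h ^ 2)) := by
      apply Real.sqrt_le_sqrt
      have k1 : 0 ≤ -h*P := mul_nonneg (neg_nonneg.2 hh0.le) hP
      have k2 : -h*P ≤ g*R := by linarith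
      have k3 : (-h*P)*(-h*P) ≤ (g*R)*(g*R) := mul_self_le_mul_self k1 k2
      nlinarith [k3]
    rw [Real.sqrt_mul (sq_nonneg h), Real.sqrt_mul (sq_nonneg g),
      Real.sqrt_sq_eq_abs, Real.sqrt_sq_eq_abs, abs_of_nonneg hg0, abs_of_neg hh0] at key
    linarith
  · -- g < 0, h ≥ 0
    have key : Real.sqrt (g ^ 2 * (R ^ 2 - h ^ 2)) ≤ Real.sqrt (h ^ 2 * (P ^ 2 - g ^ 2)) := by
      apply Real.sqrt_le_sqrt
      have k1 : 0 ≤ -g*R := mul_nonneg (neg_nonneg.2 hg0.le) hR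
      have k2 : -g*R ≤ h*P := by linarith
      have k3 : (-g*R)*(-g*R) ≤ (h*P)*(h*P) := mul_self_le_mul_self k1 k2
      nlinarith [k3]
    rw [Real.sqrt_mul (sq_nonneg h), Real.sqrt_mul (sq_nonneg g),
      Real.sqrt_sq_eq_abs, Real.sqrt_sq_eq_abs, abs_of_nonneg hh0, abs_of_neg hg0] at key
    linarith
  · -- both negative: contradiction
    exfalso
    have h1 : g * R ≤ 0 := mul_nonpos_of_nonpos_of_nonneg hg0.le hR
    have h2 : h * P ≤ 0 := mul_nonpos_of_nonpos_of_nonneg hh0.le hP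
    have hgR : g * R = 0 := by linarith
    have hhP : h * P = 0 := by linarith
    rcases mul_eq_zero.mp hgR with h' | h'
    · linarith
    · -- R = 0, so |h| ≤ 0, contradiction with h < 0
      rw [h'] at hh
      have := abs_nonneg h
      have : h = 0 := abs_eq_zero.mp (le_antisymm hh (abs_nonneg h))
      linarith

set_option maxHeartbeats 800000 in
private lemma flip_key (P R u v U V : ℝ)
    (huU : U ≤ u) (hd : u - U = v - V)
    (h1 : |u| ≤ P) (h2 : |U| ≤ P) (h3 : |v| ≤ R) (h4 : |V| ≤ R)
    (hUV : 0 ≤ U * R + V * P) :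
    Real.sqrt (P ^ 2 - u ^ 2) + Real.sqrt (R ^ 2 - v ^ 2) ≤
      Real.sqrt (P ^ 2 - U ^ 2) + Real.sqrt (R ^ 2 - V ^ 2) := by
  have hP : 0 ≤ P := le_trans (abs_nonneg u) h1
  have hR : 0 ≤ R := le_trans (abs_nonneg v) h3
  rcases eq_or_lt_of_le huU with h | h
  · have hv : v = V := by linarith
    rw [h, hv]
  -- ε := u - U > 0
  have sqle : ∀ a b : ℝ, |a| ≤ b → a ^ 2 ≤ b ^ 2 := fun a b hab =>
    sq_le_sq' (by linarith [neg_abs_le a]) (le_trans (le_abs_self a) hab)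
  have hPU : 0 ≤ P ^ 2 - U ^ 2 := by linarith [sqle U P h2]
  have hPu : 0 ≤ P ^ 2 - u ^ 2 := by linarith [sqle u P h1]
  have hRV : 0 ≤ R ^ 2 - V ^ 2 := by linarith [sqle V R h4]
  have hRv : 0 ≤ R ^ 2 - v ^ 2 := by linarith [sqle v R h3]
  set A1 := Real.sqrt (P ^ 2 - U ^ 2) with hA1
  set B1 := Real.sqrt (P ^ 2 - u ^ 2) with hB1
  set A2 := Real.sqrt (R ^ 2 - V ^ 2) with hA2
  set B2 := Real.sqrt (R ^ 2 - v ^ 2) with hB2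
  have hA1sq : A1 ^ 2 = P ^ 2 - U ^ 2 := Real.sq_sqrt hPU
  have hB1sq : B1 ^ 2 = P ^ 2 - u ^ 2 := Real.sq_sqrt hPu
  have hA2sq : A2 ^ 2 = R ^ 2 - V ^ 2 := Real.sq_sqrt hRV
  have hB2sq : B2 ^ 2 = R ^ 2 - v ^ 2 := Real.sq_sqrt hRv
  have hA1n : 0 ≤ A1 := Real.sqrt_nonneg _
  have hB1n : 0 ≤ B1 := Real.sqrt_nonneg _
  have hA2n : 0 ≤ A2 := Real.sqrt_nonneg _
  have hB2n : 0 ≤ B2 := Real.sqrt_nonneg _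
  -- the four star inequalities
  have t1 : 0 ≤ (u - U) * R := mul_nonneg (by linarith) hR
  have t2 : 0 ≤ (v - V) * P := mul_nonneg (by linarith) hP
  have huv : 0 ≤ u * R + v * P := by linarith [t1, t2]
  have huV : 0 ≤ u * R + V * P := by linarith [t1]
  have hUv : 0 ≤ U * R + v * P := by linarith [t2]
  have s1 : 0 ≤ u * B2 + v * B1 := star_ineq P R u v h1 h3 huv
  have s2 : 0 ≤ U * A2 + V * A1 := star_ineq P R U V h2 h4 hUV
  have s3 : 0 ≤ u * A2 + V * B1 := star_ineq P R u V h1 h4 huV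
  have s4 : 0 ≤ U * B2 + v * A1 := star_ineq P R U v h2 h3 hUv
  have hfour : 0 ≤ (u + U) * (A2 + B2) + (v + V) * (A1 + B1) := by linarith [s1, s2, s3, s4]
  have hsum : 0 ≤ (u ^ 2 - U ^ 2) * (A2 + B2) + (v ^ 2 - V ^ 2) * (A1 + B1) := by
    have e : (u ^ 2 - U ^ 2) * (A2 + B2) + (v ^ 2 - V ^ 2) * (A1 + B1)
        = (u - U) * ((u + U) * (A2 + B2) + (v + V) * (A1 + B1)) := by
      linear_combination -(A1 + B1) * (v + V) * hd
    rw [e]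
    exact mul_nonneg (by linarith) hfour
  -- S1 > 0
  have hS1 : 0 < A1 + B1 := by
    rcases (lt_or_eq_of_le (by linarith : (0:ℝ) ≤ A1 + B1)) with h' | h'
    · exact h'
    exfalso
    have hA10 : A1 = 0 := by linarith
    have hB10 : B1 = 0 := by linarith
    have hU2 : U ^ 2 = P ^ 2 := by
      have := hA1sq; rw [hA10] at this; simp at this; linarith
    have hu2 : u ^ 2 = P ^ 2 := by
      have := hB1sq; rw [hB10] at this; simp at this; linarith
    have hprod : (u - U) * (u + U) = 0 := by linear_combination hu2 - hU2
    have huU0 : u + U = 0 := by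
      rcases mul_eq_zero.mp hprod with h'' | h''
      · exfalso; linarith
      · exact h''
    have hupos : 0 < u := by linarith
    have huP : u = P := by
      have : (u - P) * (u + P) = 0 := by linear_combination hu2
      rcases mul_eq_zero.mp this with h'' | h''
      · linarith
      · exfalso; linarith
    have hPpos : 0 < P := by linarith
    -- U = -P, so hUV gives P*(V-R) ≥ 0, hence V ≥ R
    have hU : U = -P := by linarith
    rw [hU] at hUV
    have hVR : R ≤ V := by
      by_contra hc
      push_neg at hc
      linarith [mul_pos hPpos (sub_pos.2 hc)]
    have : v ≤ R := le_trans (le_abs_self v) h3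
    linarith
  have hS2 : 0 < A2 + B2 := by
    rcases (lt_or_eq_of_le (by linarith : (0:ℝ) ≤ A2 + B2)) with h' | h'
    · exact h'
    exfalso
    have hA20 : A2 = 0 := by linarith
    have hB20 : B2 = 0 := by linarith
    have hV2 : V ^ 2 = R ^ 2 := by
      have := hA2sq; rw [hA20] at this; simp at this; linarith
    have hv2 : v ^ 2 = R ^ 2 := by
      have := hB2sq; rw [hB20] at this; simp at this; linarith
    have hvV : V < v := by linarith
    have hprod : (v - V) * (v + V) = 0 := by linear_combination hv2 - hV2
    have hvV0 : v + V = 0 := by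
      rcases mul_eq_zero.mp hprod with h'' | h''
      · exfalso; linarith
      · exact h''
    have hvpos : 0 < v := by linarith
    have hvR : v = R := by
      have : (v - R) * (v + R) = 0 := by linear_combination hv2
      rcases mul_eq_zero.mp this with h'' | h''
      · linarith
      · exfalso; linarith
    have hRpos : 0 < R := by linarith
    have hV : V = -R := by linarith
    rw [hV] at hUV
    have hUP : P ≤ U := by
      by_contra hc
      push_neg at hc
      linarith [mul_pos hRpos (sub_pos.2 hc)]
    have : u ≤ P := le_trans (le_abs_self u) h1
    linarith
  have e2 : (A1 + B1) * (A2 + B2) * ((A1 + A2) - (B1 + B2))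
      = (u ^ 2 - U ^ 2) * (A2 + B2) + (v ^ 2 - V ^ 2) * (A1 + B1) := by
    linear_combination (A2 + B2) * hA1sq - (A2 + B2) * hB1sq + (A1 + B1) * hA2sq
      - (A1 + B1) * hB2sq
  have hfin : 0 ≤ (A1 + B1) * (A2 + B2) * ((A1 + A2) - (B1 + B2)) := by
    rw [e2]; exact hsum
  by_contra hc
  push_neg at hc
  linarith [mul_pos (mul_pos hS1 hS2) (sub_pos.2 hc), hfin]

private lemma sin_formula (u v : Space3) :
    Real.sin (InnerProductGeometry.angle u v) * (‖u‖ * ‖v‖)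
      = Real.sqrt (‖u‖ ^ 2 * ‖v‖ ^ 2 - ⟪u, v⟫ ^ 2) := by
  rw [InnerProductGeometry.sin_angle_mul_norm_mul_norm]
  congr 1
  rw [real_inner_self_eq_norm_sq, real_inner_self_eq_norm_sq]
  ring

private lemma inner_expand (w e z : Space3) :
    ⟪w - e, z - e⟫ = ⟪w, z⟫ - ⟪w, e⟫ - ⟪z, e⟫ + ⟪e, e⟫ := by
  rw [inner_sub_left, inner_sub_right, inner_sub_right, real_inner_comm e z]
  ring

private lemma inner_expand_smul (w z e : Space3) (lam mu : ℝ) :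
    ⟪w - lam • e, z - mu • e⟫
      = ⟪w, z⟫ - mu * ⟪w, e⟫ - lam * ⟪z, e⟫ + lam * mu * ⟪e, e⟫ := by
  rw [inner_sub_left, inner_sub_right, inner_sub_right, real_inner_smul_left,
    real_inner_smul_left, real_inner_smul_right, real_inner_smul_right,
    real_inner_comm e z]
  ring

private lemma norm_sub_smul (w e : Space3) (lam : ℝ) :
    ‖w - lam • e‖ ^ 2 = ‖w‖ ^ 2 - 2 * lam * ⟪w, e⟫ + lam ^ 2 * ‖e‖ ^ 2 := by
  rw [norm_sub_sq_real, real_inner_smul_right, norm_smul, Real.norm_eq_abs, mul_pow, sq_abs]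
  ring

private lemma inner_eq_norms (u v : Space3) :
    ⟪u, v⟫ = (‖u‖ ^ 2 + ‖v‖ ^ 2 - ‖u - v‖ ^ 2) / 2 := by
  have := norm_sub_sq_real u v
  linarith

private lemma angle_eq_vec (p1 p2 p3 : Space3) :
    ∠ p1 p2 p3 = InnerProductGeometry.angle (p1 - p2) (p3 - p2) := rfl

private lemma two_triArea3 (p1 p2 p3 : Space3) :
    2 * triArea3 p1 p2 p3
      = Real.sqrt (‖p1 - p2‖ ^ 2 * ‖p3 - p2‖ ^ 2 - ⟪p1 - p2, p3 - p2⟫ ^ 2) := by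
  unfold triArea3
  rw [dist_comm p2 p1, dist_comm p2 p3, dist_eq_norm, dist_eq_norm, angle_eq_vec,
    ← sin_formula]
  ring

set_option maxHeartbeats 1600000 in
theorem flip_area_not_increasing
    (a b x y : Space3) (hab : a ≠ b) (hxa : x ≠ a) (hxb : x ≠ b)
    (hya : y ≠ a) (hyb : y ≠ b) (hxy : x ≠ y)
    (hangles : ∠ a b x + ∠ a b y + ∠ b a x + ∠ b a y ≤ Real.pi) :
    triArea3 a b x + triArea3 a b y ≥ triArea3 a x y + triArea3 b x y := by
  -- scalar data
  set c : ℝ := ‖b - a‖ with hcdef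
  set p : ℝ := ‖x - a‖ with hpdef
  set q : ℝ := ‖y - a‖ with hqdef
  set r : ℝ := ‖x - b‖ with hrdef
  set s : ℝ := ‖y - b‖ with hsdef
  set t : ℝ := ‖x - y‖ with htdef
  have hc : 0 < c := norm_pos_iff.mpr (sub_ne_zero.mpr (Ne.symm hab))
  have hp : 0 < p := norm_pos_iff.mpr (sub_ne_zero.mpr hxa)
  have hq : 0 < q := norm_pos_iff.mpr (sub_ne_zero.mpr hya)
  have hr : 0 < r := norm_pos_iff.mpr (sub_ne_zero.mpr hxb)
  have hs : 0 < s := norm_pos_iff.mpr (sub_ne_zero.mpr hyb)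
  have ht : 0 < t := norm_pos_iff.mpr (sub_ne_zero.mpr hxy)
  set m : ℝ := ⟪x - a, b - a⟫ / c with hmdef
  set m' : ℝ := ⟪y - a, b - a⟫ / c with hm'def
  set K : ℝ := ⟪x - a, y - a⟫ with hKdef
  set K' : ℝ := ⟪x - b, y - b⟫ with hK'def
  have hM : ⟪x - a, b - a⟫ = c * m := by rw [hmdef]; field_simp
  have hM' : ⟪y - a, b - a⟫ = c * m' := by rw [hm'def]; field_simp
  -- |m| ≤ p, |m'| ≤ q
  have hmabs : |m| ≤ p := by
    have h1 := abs_real_inner_le_norm (x - a) (b - a)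
    rw [hM, abs_mul, abs_of_pos hc] at h1
    have : c * |m| ≤ c * p := by calc c * |m| ≤ p * c := h1
                                    _ = c * p := by ring
    exact le_of_mul_le_mul_left this hc
  have hm'abs : |m'| ≤ q := by
    have h1 := abs_real_inner_le_norm (y - a) (b - a)
    rw [hM', abs_mul, abs_of_pos hc] at h1
    have : c * |m'| ≤ c * q := by calc c * |m'| ≤ q * c := h1
                                     _ = c * q := by ring
    exact le_of_mul_le_mul_left this hc
  have hm2 : m ^ 2 ≤ p ^ 2 := sq_le_sq' (by linarith [neg_abs_le m, le_abs_self m]) (le_trans (le_abs_self m) hmabs)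
  have hm'2 : m' ^ 2 ≤ q ^ 2 := sq_le_sq' (by linarith [neg_abs_le m', le_abs_self m']) (le_trans (le_abs_self m') hm'abs)
  set hX : ℝ := Real.sqrt (p ^ 2 - m ^ 2) with hXdef
  set hY : ℝ := Real.sqrt (q ^ 2 - m' ^ 2) with hYdef
  have hX2 : hX ^ 2 = p ^ 2 - m ^ 2 := Real.sq_sqrt (by linarith)
  have hY2 : hY ^ 2 = q ^ 2 - m' ^ 2 := Real.sq_sqrt (by linarith)
  have hXn : 0 ≤ hX := Real.sqrt_nonneg _
  have hYn : 0 ≤ hY := Real.sqrt_nonneg _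
  -- norm expansions
  have hveq1 : (x : Space3) - a - (b - a) = x - b := by abel
  have hveq2 : (y : Space3) - a - (b - a) = y - b := by abel
  have hveq3 : (x : Space3) - a - (y - a) = x - y := by abel
  have hveq4 : (x : Space3) - b - (y - b) = x - y := by abel
  have hr2 : r ^ 2 = p ^ 2 - 2 * (c * m) + c ^ 2 := by
    have := norm_sub_sq_real (x - a) (b - a)
    rw [hveq1, hM] at this
    rw [hrdef, this, hpdef, hcdef]
  have hs2 : s ^ 2 = q ^ 2 - 2 * (c * m') + c ^ 2 := by
    have := norm_sub_sq_real (y - a) (b - a)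
    rw [hveq2, hM'] at this
    rw [hsdef, this, hqdef, hcdef]
  have ht2 : t ^ 2 = p ^ 2 - 2 * K + q ^ 2 := by
    have := norm_sub_sq_real (x - a) (y - a)
    rw [hveq3] at this
    rw [htdef, this, hpdef, hqdef, hKdef]
  have ht2' : t ^ 2 = r ^ 2 - 2 * K' + s ^ 2 := by
    have := norm_sub_sq_real (x - b) (y - b)
    rw [hveq4] at this
    rw [htdef, this, hrdef, hsdef, hK'def]
  have hKabs : |K| ≤ p * q := abs_real_inner_le_norm (x - a) (y - a)
  have hK'abs : |K'| ≤ r * s := abs_real_inner_le_norm (x - b) (y - b)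
  -- K' in terms of K
  have hK'eq : K' = K - c * m - c * m' + c ^ 2 := by
    rw [hK'def, ← hveq1, ← hveq2, inner_expand, hM, hM',
      real_inner_self_eq_norm_sq, ← hcdef, ← hKdef]
  -- Cauchy-Schwarz for the orthogonal parts: K - m * m' ≥ - hX * hY
  have hQcs : -(hX * hY) ≤ K - m * m' := by
    set w' : Space3 := (x - a) - (m / c) • (b - a) with hw'def
    set z' : Space3 := (y - a) - (m' / c) • (b - a) with hz'def
    have hinner : ⟪w', z'⟫ = K - m * m' := by
      rw [hw'def, hz'def, inner_expand_smul, hM, hM',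
        real_inner_self_eq_norm_sq, ← hcdef, ← hKdef]
      field_simp
      ring
    have hw'n : ‖w'‖ = hX := by
      have h1 : ‖w'‖ ^ 2 = p ^ 2 - m ^ 2 := by
        rw [hw'def, norm_sub_smul, hM, ← hpdef, ← hcdef]
        field_simp
        ring
      rw [hXdef, ← h1, Real.sqrt_sq (norm_nonneg _)]
    have hz'n : ‖z'‖ = hY := by
      have h1 : ‖z'‖ ^ 2 = q ^ 2 - m' ^ 2 := by
        rw [hz'def, norm_sub_smul, hM', ← hqdef, ← hcdef]
        field_simp
        ring
      rw [hYdef, ← h1, Real.sqrt_sq (norm_nonneg _)]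
    have := abs_real_inner_le_norm w' z'
    rw [hinner, hw'n, hz'n] at this
    linarith [neg_abs_le (K - m * m')]
  -- angles
  set α1 : ℝ := ∠ b a x with ha1def
  set α2 : ℝ := ∠ b a y with ha2def
  set β1 : ℝ := ∠ a b x with hb1def
  set β2 : ℝ := ∠ a b y with hb2def
  have ha1n : 0 ≤ α1 := by rw [ha1def]; exact angle_nonneg _ _ _
  have ha2n : 0 ≤ α2 := by rw [ha2def]; exact angle_nonneg _ _ _
  have hb1n : 0 ≤ β1 := by rw [hb1def]; exact angle_nonneg _ _ _
  have hb2n : 0 ≤ β2 := by rw [hb2def]; exact angle_nonneg _ _ _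
  have hcba : ‖a - b‖ = c := by rw [norm_sub_rev, ← hcdef]
  have hvab1 : (a : Space3) - b - (x - b) = a - x := by abel
  have hvab2 : (a : Space3) - b - (y - b) = a - y := by abel
  have hnax : ‖a - x‖ = p := by rw [norm_sub_rev, ← hpdef]
  have hnay : ‖a - y‖ = q := by rw [norm_sub_rev, ← hqdef]
  have hab1 : ⟪a - b, x - b⟫ = c * (c - m) := by
    rw [inner_eq_norms, hvab1, hcba, ← hrdef, hnax]
    linear_combination hr2 / 2
  have hab2 : ⟪a - b, y - b⟫ = c * (c - m') := by
    rw [inner_eq_norms, hvab2, hcba, ← hsdef, hnay]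
    linear_combination hs2 / 2
  -- cosine values
  have hcosa1 : Real.cos α1 = m / p := by
    rw [ha1def, angle_eq_vec, InnerProductGeometry.cos_angle,
      real_inner_comm, hM, ← hcdef, ← hpdef, mul_div_mul_left m p hc.ne']
  have hcosa2 : Real.cos α2 = m' / q := by
    rw [ha2def, angle_eq_vec, InnerProductGeometry.cos_angle,
      real_inner_comm, hM', ← hcdef, ← hqdef, mul_div_mul_left m' q hc.ne']
  have hcosb1 : Real.cos β1 = (c - m) / r := by
    rw [hb1def, angle_eq_vec, InnerProductGeometry.cos_angle, hab1, hcba, ← hrdef,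
      mul_div_mul_left (c - m) r hc.ne']
  have hcosb2 : Real.cos β2 = (c - m') / s := by
    rw [hb2def, angle_eq_vec, InnerProductGeometry.cos_angle, hab2, hcba, ← hsdef,
      mul_div_mul_left (c - m') s hc.ne']
  -- sine values
  have hsina1 : Real.sin α1 = hX / p := by
    have h0 := sin_formula (b - a) (x - a)
    rw [real_inner_comm, hM, ← hcdef, ← hpdef] at h0
    have h1 : Real.sqrt (c ^ 2 * p ^ 2 - (c * m) ^ 2) = c * hX := by
      rw [show c ^ 2 * p ^ 2 - (c * m) ^ 2 = c ^ 2 * (p ^ 2 - m ^ 2) by ring,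
        Real.sqrt_mul (sq_nonneg c), Real.sqrt_sq hc.le, ← hXdef]
    rw [h1] at h0
    rw [ha1def, angle_eq_vec, ← mul_div_mul_left hX p hc.ne',
      eq_div_iff (by positivity : c * p ≠ 0)]
    exact h0
  have hsina2 : Real.sin α2 = hY / q := by
    have h0 := sin_formula (b - a) (y - a)
    rw [real_inner_comm, hM', ← hcdef, ← hqdef] at h0
    have h1 : Real.sqrt (c ^ 2 * q ^ 2 - (c * m') ^ 2) = c * hY := by
      rw [show c ^ 2 * q ^ 2 - (c * m') ^ 2 = c ^ 2 * (q ^ 2 - m' ^ 2) by ring,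
        Real.sqrt_mul (sq_nonneg c), Real.sqrt_sq hc.le, ← hYdef]
    rw [h1] at h0
    rw [ha2def, angle_eq_vec, ← mul_div_mul_left hY q hc.ne',
      eq_div_iff (by positivity : c * q ≠ 0)]
    exact h0
  have hsinb1 : Real.sin β1 = hX / r := by
    have h0 := sin_formula (a - b) (x - b)
    rw [hab1, hcba, ← hrdef] at h0
    have h1 : Real.sqrt (c ^ 2 * r ^ 2 - (c * (c - m)) ^ 2) = c * hX := by
      rw [show c ^ 2 * r ^ 2 - (c * (c - m)) ^ 2 = c ^ 2 * (p ^ 2 - m ^ 2) by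
        linear_combination c ^ 2 * hr2, Real.sqrt_mul (sq_nonneg c),
        Real.sqrt_sq hc.le, ← hXdef]
    rw [h1] at h0
    rw [hb1def, angle_eq_vec, ← mul_div_mul_left hX r hc.ne',
      eq_div_iff (by positivity : c * r ≠ 0)]
    exact h0
  have hsinb2 : Real.sin β2 = hY / s := by
    have h0 := sin_formula (a - b) (y - b)
    rw [hab2, hcba, ← hsdef] at h0
    have h1 : Real.sqrt (c ^ 2 * s ^ 2 - (c * (c - m')) ^ 2) = c * hY := by
      rw [show c ^ 2 * s ^ 2 - (c * (c - m')) ^ 2 = c ^ 2 * (q ^ 2 - m' ^ 2) by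
        linear_combination c ^ 2 * hs2, Real.sqrt_mul (sq_nonneg c),
        Real.sqrt_sq hc.le, ← hYdef]
    rw [h1] at h0
    rw [hb2def, angle_eq_vec, ← mul_div_mul_left hY s hc.ne',
      eq_div_iff (by positivity : c * s ≠ 0)]
    exact h0
  -- U and V
  set U : ℝ := 2 * (m * m' - hX * hY) with hUdef
  set V : ℝ := 2 * ((c - m) * (c - m') - hX * hY) with hVdef
  have hUcos : U = 2 * (p * q) * Real.cos (α1 + α2) := by
    rw [hUdef, Real.cos_add, hcosa1, hcosa2, hsina1, hsina2]
    field_simp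
  have hVcos : V = 2 * (r * s) * Real.cos (β1 + β2) := by
    rw [hVdef, Real.cos_add, hcosb1, hcosb2, hsinb1, hsinb2]
    field_simp
  have hUsin : 2 * (p * q) * Real.sin (α1 + α2) = 2 * (hX * m' + m * hY) := by
    rw [Real.sin_add, hcosa1, hcosa2, hsina1, hsina2]
    field_simp
  have hVsin : 2 * (r * s) * Real.sin (β1 + β2) = 2 * (hX * (c - m') + (c - m) * hY) := by
    rw [Real.sin_add, hcosb1, hcosb2, hsinb1, hsinb2]
    field_simp
  -- the angle hypothesis
  have hcoscos : 0 ≤ Real.cos (α1 + α2) + Real.cos (β1 + β2) := by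
    have h0 : α1 + α2 ≤ Real.pi - (β1 + β2) := by linarith
    have h1 : Real.cos (Real.pi - (β1 + β2)) ≤ Real.cos (α1 + α2) :=
      Real.cos_le_cos_of_nonneg_of_le_pi (by linarith) (by linarith) h0
    rw [Real.cos_pi_sub] at h1
    linarith
  have hUV : 0 ≤ U * (2 * (r * s)) + V * (2 * (p * q)) := by
    have hre : 2 * (p * q) * Real.cos (α1 + α2) * (2 * (r * s))
        + 2 * (r * s) * Real.cos (β1 + β2) * (2 * (p * q))
        = 4 * (p * q * (r * s)) * (Real.cos (α1 + α2) + Real.cos (β1 + β2)) := by ring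
    rw [hUcos, hVcos, hre]
    exact mul_nonneg (by positivity) hcoscos
  have habsU : |U| ≤ 2 * (p * q) := by
    rw [hUcos, abs_mul, abs_of_nonneg (by positivity : (0:ℝ) ≤ 2 * (p * q))]
    have habs : |Real.cos (α1 + α2)| ≤ 1 :=
      abs_le.mpr ⟨by linarith [Real.neg_one_le_cos (α1 + α2)], Real.cos_le_one _⟩
    exact mul_le_of_le_one_right (by positivity) habs
  have habsV : |V| ≤ 2 * (r * s) := by
    rw [hVcos, abs_mul, abs_of_nonneg (by positivity : (0:ℝ) ≤ 2 * (r * s))]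
    have habs : |Real.cos (β1 + β2)| ≤ 1 :=
      abs_le.mpr ⟨by linarith [Real.neg_one_le_cos (β1 + β2)], Real.cos_le_one _⟩
    exact mul_le_of_le_one_right (by positivity) habs
  have habsu : |2 * K| ≤ 2 * (p * q) := by
    have : |2 * K| = 2 * |K| := by rw [abs_mul]; norm_num
    linarith [hKabs]
  have habsv : |2 * K'| ≤ 2 * (r * s) := by
    have : |2 * K'| = 2 * |K'| := by rw [abs_mul]; norm_num
    linarith [hK'abs]
  have huU : U ≤ 2 * K := by rw [hUdef]; linarith
  have hdiff : 2 * K - U = 2 * K' - V := by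
    rw [hUdef, hVdef]; linear_combination (-2) * hK'eq
  have key := flip_key (2 * (p * q)) (2 * (r * s)) (2 * K) (2 * K') U V
    huU hdiff habsu habsU habsv habsV hUV
  -- areas of the two old triangles
  have hArea1 : 2 * triArea3 a b x = c * hX := by
    rw [two_triArea3, hcba, ← hrdef, hab1]
    rw [show c ^ 2 * r ^ 2 - (c * (c - m)) ^ 2 = c ^ 2 * (p ^ 2 - m ^ 2) by
      linear_combination c ^ 2 * hr2, Real.sqrt_mul (sq_nonneg c),
      Real.sqrt_sq hc.le, ← hXdef]
  have hArea2 : 2 * triArea3 a b y = c * hY := by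
    rw [two_triArea3, hcba, ← hsdef, hab2]
    rw [show c ^ 2 * s ^ 2 - (c * (c - m')) ^ 2 = c ^ 2 * (q ^ 2 - m' ^ 2) by
      linear_combination c ^ 2 * hs2, Real.sqrt_mul (sq_nonneg c),
      Real.sqrt_sq hc.le, ← hYdef]
  -- areas of the two new triangles
  have hnyx : ‖y - x‖ = t := by rw [norm_sub_rev, ← htdef]
  have hnbx : ‖b - x‖ = r := by rw [norm_sub_rev, ← hrdef]
  have hvax1 : (a : Space3) - x - (y - x) = a - y := by abel
  have hvbx1 : (b : Space3) - x - (y - x) = b - y := by abel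
  have hnby : ‖b - y‖ = s := by rw [norm_sub_rev, ← hsdef]
  have hax1 : ⟪a - x, y - x⟫ = p ^ 2 - K := by
    rw [inner_eq_norms, hvax1, hnax, hnyx, hnay]
    linear_combination ht2 / 2
  have hbx1 : ⟪b - x, y - x⟫ = r ^ 2 - K' := by
    rw [inner_eq_norms, hvbx1, hnbx, hnyx, hnby]
    linear_combination ht2' / 2
  have hArea3 : 4 * triArea3 a x y = Real.sqrt ((2 * (p * q)) ^ 2 - (2 * K) ^ 2) := by
    have h2 := two_triArea3 a x y
    rw [hnax, hnyx, hax1] at h2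
    have harg : (2 * (p * q)) ^ 2 - (2 * K) ^ 2
        = 2 ^ 2 * (p ^ 2 * t ^ 2 - (p ^ 2 - K) ^ 2) := by
      linear_combination (-4 * p ^ 2) * ht2
    rw [harg, Real.sqrt_mul (by norm_num : (0:ℝ) ≤ 2 ^ 2),
      Real.sqrt_sq (by norm_num : (0:ℝ) ≤ 2), ← h2]
    ring
  have hArea4 : 4 * triArea3 b x y = Real.sqrt ((2 * (r * s)) ^ 2 - (2 * K') ^ 2) := by
    have h2 := two_triArea3 b x y
    rw [hnbx, hnyx, hbx1] at h2
    have harg : (2 * (r * s)) ^ 2 - (2 * K') ^ 2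
        = 2 ^ 2 * (r ^ 2 * t ^ 2 - (r ^ 2 - K') ^ 2) := by
      linear_combination (-4 * r ^ 2) * ht2'
    rw [harg, Real.sqrt_mul (by norm_num : (0:ℝ) ≤ 2 ^ 2),
      Real.sqrt_sq (by norm_num : (0:ℝ) ≤ 2), ← h2]
    ring
  -- evaluating the right-hand side of the key inequality
  have hsAn : 0 ≤ Real.sin (α1 + α2) :=
    Real.sin_nonneg_of_nonneg_of_le_pi (by linarith) (by linarith)
  have hsBn : 0 ≤ Real.sin (β1 + β2) :=
    Real.sin_nonneg_of_nonneg_of_le_pi (by linarith) (by linarith)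
  have hRHS1 : Real.sqrt ((2 * (p * q)) ^ 2 - U ^ 2) = 2 * (hX * m' + m * hY) := by
    rw [hUcos]
    have harg : (2 * (p * q)) ^ 2 - (2 * (p * q) * Real.cos (α1 + α2)) ^ 2
        = (2 * (p * q) * Real.sin (α1 + α2)) ^ 2 := by
      linear_combination (-(2 * (p * q)) ^ 2) * Real.sin_sq_add_cos_sq (α1 + α2)
    rw [harg, Real.sqrt_sq (mul_nonneg (by positivity) hsAn), hUsin]
  have hRHS2 : Real.sqrt ((2 * (r * s)) ^ 2 - V ^ 2)
      = 2 * (hX * (c - m') + (c - m) * hY) := by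
    rw [hVcos]
    have harg : (2 * (r * s)) ^ 2 - (2 * (r * s) * Real.cos (β1 + β2)) ^ 2
        = (2 * (r * s) * Real.sin (β1 + β2)) ^ 2 := by
      linear_combination (-(2 * (r * s)) ^ 2) * Real.sin_sq_add_cos_sq (β1 + β2)
    rw [harg, Real.sqrt_sq (mul_nonneg (by positivity) hsBn), hVsin]
  rw [hRHS1, hRHS2, ← hArea3, ← hArea4] at key
  linarith [key, hArea1, hArea2]
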